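/- (Okunev) Let κ be an infinite cardinal, n ∈ ℕ, and X_0, …, X_n compact Hausdorff spaces with t₀(X_k) ≤ κ for each k ≤ n. Then t₀(∏_{k≤n} X_k) ≤ κ: every κ-continuous real-valued function on the finite product is continuous. -/

import Mathlib

open Cardinal Set Filter Topology

/-!
If `Y` is compact and `f : X × Y → ℝ` is κ-continuous, then so is the curried map
`X → C(Y, ℝ)`. When `t₀(X) ≤ κ`, κ-continuity of a map `Φ` into a metric space already gives
continuity, as it is tested by the real functions `x ↦ dist (Φ x) (Φ a)`. So for `t₀(Y) ≤ κ`
the sections `f (x, ·)` are continuous, the curried map is continuous, and hence so is `f`;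
induction on the number of factors handles finite products.
-/

universe u

def KappaContinuous (κ : Cardinal.{u}) {α : Type u} {β : Type*} [TopologicalSpace α]
    [TopologicalSpace β] (f : α → β) : Prop :=
  ∀ A : Set α, #A ≤ κ → ContinuousOn f A

/-- `t₀(α) ≤ κ`. -/
def FunctionalTightnessLE (κ : Cardinal.{u}) (α : Type u) [TopologicalSpace α] : Prop :=
  ∀ g : α → ℝ, KappaContinuous κ g → Continuous g

section

variable {κ : Cardinal.{u}} {α γ : Type u} {β : Type*}
  [TopologicalSpace α] [TopologicalSpace γ] [TopologicalSpace β]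

theorem kappaContinuous_iff_continuous_domRestrict {f : α → β} :
    KappaContinuous κ f ↔ ∀ A : Set α, #A ≤ κ → Continuous (A.domRestrict f) :=
  forall₂_congr fun _ _ ↦ continuousOn_iff_continuous_domRestrict

theorem KappaContinuous.comp_continuous {f : γ → β} {g : α → γ} (hf : KappaContinuous κ f)
    (hg : Continuous g) : KappaContinuous κ (f ∘ g) := fun A hA ↦
  (hf _ (mk_image_le.trans hA)).comp hg.continuousOn (mapsTo_image g A)

theorem Continuous.comp_kappaContinuous {δ : Type*} [TopologicalSpace δ] {g : β → δ}
    {f : α → β} (hg : Continuous g) (hf : KappaContinuous κ f) :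
    KappaContinuous κ (g ∘ f) := fun A hA ↦ hg.comp_continuousOn (hf A hA)

theorem ContinuousMap.exists_dist_le_dist_apply {Y E : Type*} [TopologicalSpace Y]
    [CompactSpace Y] [Nonempty Y] [MetricSpace E] (g h : C(Y, E)) :
    ∃ y, dist g h ≤ dist (g y) (h y) := by
  obtain ⟨y, -, hy⟩ := isCompact_univ.exists_isMaxOn univ_nonempty
    (g.continuous.dist h.continuous).continuousOn
  exact ⟨y, (ContinuousMap.dist_le dist_nonneg).2 fun z ↦ hy (mem_univ z)⟩

/-- Along an ultrafilter converging to `a`, a point `ψ x` where `f (x, ·)` is farthest from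
`f (a, ·)` converges to some `y₀` by compactness, and `f` is continuous on the `κ`-small set
consisting of the graph of `ψ` together with `(a, y₀)`. -/
theorem KappaContinuous.curry {X Y : Type u} [TopologicalSpace X] [TopologicalSpace Y]
    [CompactSpace Y] (hκ : ℵ₀ ≤ κ) {f : X × Y → ℝ} (hf : KappaContinuous κ f)
    (hc : ∀ x, Continuous fun y ↦ f (x, y)) :
    KappaContinuous κ fun x ↦ (⟨fun y ↦ f (x, y), hc x⟩ : C(Y, ℝ)) := by
  set Φ : X → C(Y, ℝ) := fun x ↦ ⟨fun y ↦ f (x, y), hc x⟩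
  cases isEmpty_or_nonempty Y
  · exact fun A _ ↦ continuousOn_of_forall_continuousAt fun _ _ ↦
      (continuous_of_const fun _ _ ↦ Subsingleton.elim _ _).continuousAt
  intro A hA a _
  choose ψ hψ using fun x ↦ (Φ x).exists_dist_le_dist_apply (Φ a)
  rw [ContinuousWithinAt, tendsto_iff_ultrafilter]
  intro U hU
  obtain ⟨y₀, -, hy₀⟩ := isCompact_univ.ultrafilter_le_nhds (U.map ψ) (by simp)
  set C := insert (a, y₀) ((fun x ↦ (x, ψ x)) '' A)
  have hCκ : #C ≤ κ := mk_insert_le.trans <|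
    add_le_of_le hκ (mk_image_le.trans hA) (one_le_aleph0.trans hκ)
  have hUa : Tendsto id U (𝓝 a) := hU.trans nhdsWithin_le_nhds
  have hgraph : Tendsto (fun x ↦ (x, ψ x)) U (𝓝[C] (a, y₀)) := by
    refine tendsto_nhdsWithin_iff.mpr ⟨hUa.prodMk_nhds hy₀, ?_⟩
    filter_upwards [hU self_mem_nhdsWithin] with x hx using
      mem_insert_of_mem _ (mem_image_of_mem _ hx)
  have hmoving : Tendsto (fun x ↦ f (x, ψ x)) U (𝓝 (f (a, y₀))) :=
    ((hf C hCκ) _ (mem_insert _ _)).tendsto.comp hgraph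
  have hfixed : Tendsto (fun x ↦ f (a, ψ x)) U (𝓝 (f (a, y₀))) :=
    ((hc a).tendsto y₀).comp hy₀
  rw [tendsto_iff_dist_tendsto_zero]
  refine squeeze_zero (fun _ ↦ dist_nonneg) hψ ?_
  have hgap := hmoving.dist hfixed
  rwa [dist_self] at hgap

namespace FunctionalTightnessLE

theorem continuous_of_kappaContinuous {M : Type*} [PseudoMetricSpace M]
    (hα : FunctionalTightnessLE κ α) {Φ : α → M} (hΦ : KappaContinuous κ Φ) : Continuous Φ := by
  refine continuous_iff_continuousAt.mpr fun a ↦ tendsto_iff_dist_tendsto_zero.mpr ?_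
  have hdist : Continuous fun x ↦ dist (Φ x) (Φ a) :=
    hα _ ((continuous_id.dist continuous_const).comp_kappaContinuous hΦ)
  simpa only [dist_self] using hdist.tendsto a

theorem of_subsingleton [Subsingleton α] : FunctionalTightnessLE κ α :=
  fun _ _ ↦ continuous_of_discreteTopology

theorem of_leftInverse (hγ : FunctionalTightnessLE κ γ) {s : γ → α} {r : α → γ}
    (hs : Continuous s) (hr : Continuous r) (hsr : Function.LeftInverse s r) :
    FunctionalTightnessLE κ α := fun g hg ↦ by
  simpa only [Function.comp_def, hsr _] using (hγ _ (hg.comp_continuous hs)).comp hr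

theorem prod {X Y : Type u} [TopologicalSpace X] [TopologicalSpace Y] [CompactSpace Y]
    (hκ : ℵ₀ ≤ κ) (hX : FunctionalTightnessLE κ X) (hY : FunctionalTightnessLE κ Y) :
    FunctionalTightnessLE κ (X × Y) := by
  intro f hf
  have hc (x : X) : Continuous fun y ↦ f (x, y) :=
    hY _ (hf.comp_continuous (Continuous.prodMk_right x))
  have hΦ := hX.continuous_of_kappaContinuous (hf.curry hκ hc)
  exact continuous_eval.comp ((hΦ.comp continuous_fst).prodMk continuous_snd)

theorem pi_fin (hκ : ℵ₀ ≤ κ) {n : ℕ} {X : Fin n → Type u} [∀ k, TopologicalSpace (X k)]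
    [∀ k, CompactSpace (X k)] (hX : ∀ k, FunctionalTightnessLE κ (X k)) :
    FunctionalTightnessLE κ (∀ k, X k) := by
  induction n with
  | zero => exact of_subsingleton
  | succ n ih =>
    exact ((hX 0).prod hκ (ih fun k ↦ hX k.succ)).of_leftInverse
      (continuous_fst.finCons continuous_snd)
      ((continuous_apply 0).prodMk continuous_id.finTail) Fin.cons_self_tail

end FunctionalTightnessLE

end

theorem functionalTightness_finite_product_general
    (κ : Cardinal) (hκ : Cardinal.aleph0 ≤ κ) (n : ℕ)
    {X : Fin (n + 1) → Type*} [∀ k, TopologicalSpace (X k)]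
    [∀ k, CompactSpace (X k)]
    (ht0 : ∀ k, ∀ g : X k → ℝ,
      (∀ A : Set (X k), #A ≤ κ → Continuous (A.restrict g)) → Continuous g)
    (f : (∀ k, X k) → ℝ)
    (hkappa : ∀ A : Set (∀ k, X k), #A ≤ κ → Continuous (A.restrict f)) :
    Continuous f :=
  FunctionalTightnessLE.pi_fin hκ
    (fun k g hg ↦ ht0 k g (kappaContinuous_iff_continuous_domRestrict.mp hg)) f
    (kappaContinuous_iff_continuous_domRestrict.mpr hkappa)

/-- (Okunev) Finite products of compact Hausdorff spaces of functional tightness ≤ κ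
have functional tightness ≤ κ. -/
theorem functionalTightness_finite_product
    (κ : Cardinal) (hκ : Cardinal.aleph0 ≤ κ) (n : ℕ)
    {X : Fin (n + 1) → Type*} [∀ k, TopologicalSpace (X k)]
    [∀ k, CompactSpace (X k)] [∀ k, T2Space (X k)]
    (ht0 : ∀ k, ∀ g : X k → ℝ,
      (∀ A : Set (X k), #A ≤ κ → Continuous (A.restrict g)) → Continuous g)
    (f : (∀ k, X k) → ℝ)
    (hkappa : ∀ A : Set (∀ k, X k), #A ≤ κ → Continuous (A.restrict f)) :
    Continuous f :=
  functionalTightness_finite_product_general κ hκ n ht0 f hkappa
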